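/- For γ_k(p) := Γ(1/p) Γ(1/q + k/2) / (Γ(1/q) Γ(1/p + k/2)) with 2 ≤ p < ∞, 1/p + 1/q = 1, the submultiplicativity γ_{k+l}(p) ≤ γ_k(p) γ_l(p) holds for all positive integers k, l. -/

import Mathlib

/-!
Put `b = a + c`. Then `Γ(a) Γ(b + x) / (Γ(b) Γ(a + x)) = B(a, c) / B(a + x, c)`, so the claim
becomes `B(a + s, c) B(a + t, c) ≤ B(a, c) B(a + s + t, c)`. Writing each Beta value as the
integral of `x ^ r` against the weight `x ^ (a - 1) (1 - x) ^ (c - 1)` on `(0, 1)`, this is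
Chebyshev's integral inequality for the two increasing functions `x ^ s` and `x ^ t`.
-/

open Real MeasureTheory Set ProbabilityTheory

theorem MeasureTheory.integral_mul_integral_le_of_monovaryOn {α : Type*} [MeasurableSpace α]
    {μ : Measure α} [SFinite μ] {s : Set α} {w f g : α → ℝ} (hs : ∀ᵐ x ∂μ, x ∈ s)
    (hfg : MonovaryOn f g s) (hw : ∀ x ∈ s, 0 ≤ w x) (hw_int : Integrable w μ)
    (hwf : Integrable (fun x ↦ w x * f x) μ) (hwg : Integrable (fun x ↦ w x * g x) μ)
    (hwfg : Integrable (fun x ↦ w x * f x * g x) μ) :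
    (∫ x, w x * f x ∂μ) * ∫ x, w x * g x ∂μ ≤ (∫ x, w x ∂μ) * ∫ x, w x * f x * g x ∂μ := by
  have hs₂ : ∀ᵐ z ∂μ.prod μ, z.1 ∈ s ∧ z.2 ∈ s :=
    (Measure.quasiMeasurePreserving_fst.ae hs).and (Measure.quasiMeasurePreserving_snd.ae hs)
  -- Chebyshev's argument: integrate the rearrangement inequality over pairs of points.
  have key : ∫ z, (w z.1 * f z.1 * (w z.2 * g z.2) + w z.1 * g z.1 * (w z.2 * f z.2)) ∂μ.prod μ ≤
      ∫ z, (w z.1 * f z.1 * g z.1 * w z.2 + w z.1 * (w z.2 * f z.2 * g z.2)) ∂μ.prod μ := by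
    refine integral_mono_ae ((hwf.mul_prod hwg).add (hwg.mul_prod hwf))
      ((hwfg.mul_prod hw_int).add (hw_int.mul_prod hwfg)) ?_
    filter_upwards [hs₂] with ⟨x, y⟩ ⟨hx, hy⟩
    have := mul_le_mul_of_nonneg_left (hfg.mul_add_mul_le_mul_add_mul hx hy)
      (mul_nonneg (hw x hx) (hw y hy))
    linarith
  have hfg_prod : ∫ z, w z.1 * f z.1 * (w z.2 * g z.2) ∂μ.prod μ =
      (∫ x, w x * f x ∂μ) * ∫ x, w x * g x ∂μ :=
    integral_prod_mul (fun x ↦ w x * f x) (fun x ↦ w x * g x)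
  have hgf_prod : ∫ z, w z.1 * g z.1 * (w z.2 * f z.2) ∂μ.prod μ =
      (∫ x, w x * g x ∂μ) * ∫ x, w x * f x ∂μ :=
    integral_prod_mul (fun x ↦ w x * g x) (fun x ↦ w x * f x)
  have hfg1_prod : ∫ z, w z.1 * f z.1 * g z.1 * w z.2 ∂μ.prod μ =
      (∫ x, w x * f x * g x ∂μ) * ∫ x, w x ∂μ :=
    integral_prod_mul (fun x ↦ w x * f x * g x) w
  have h1fg_prod : ∫ z, w z.1 * (w z.2 * f z.2 * g z.2) ∂μ.prod μ =
      (∫ x, w x ∂μ) * ∫ x, w x * f x * g x ∂μ :=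
    integral_prod_mul w (fun x ↦ w x * f x * g x)
  rw [integral_add (hwf.mul_prod hwg) (hwg.mul_prod hwf),
    integral_add (hwfg.mul_prod hw_int) (hw_int.mul_prod hwfg)] at key
  linarith

theorem integrableOn_rpow_mul_one_sub_rpow {u v : ℝ} (hu : 0 < u) (hv : 0 < v) :
    IntegrableOn (fun x : ℝ ↦ x ^ (u - 1) * (1 - x) ^ (v - 1)) (Ioo 0 1) := by
  have h := (Complex.betaIntegral_convergent (u := u) (v := v) (by simpa) (by simpa)).norm
  rw [intervalIntegrable_iff_integrableOn_Ioc_of_le zero_le_one,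
    integrableOn_Ioc_iff_integrableOn_Ioo] at h
  refine h.congr_fun (fun x ⟨hx0, hx1⟩ ↦ ?_) measurableSet_Ioo
  have : (1 : ℂ) - x = ((1 - x : ℝ) : ℂ) := by push_cast; ring
  simp only [norm_mul, this, Complex.norm_cpow_eq_rpow_re_of_pos hx0,
    Complex.norm_cpow_eq_rpow_re_of_pos (sub_pos.2 hx1)]
  simp

theorem ProbabilityTheory.beta_eq_integral {u v : ℝ} (hu : 0 < u) (hv : 0 < v) :
    beta u v = ∫ x in Ioo 0 1, x ^ (u - 1) * (1 - x) ^ (v - 1) := by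
  have h : ∀ x ∈ Ioo (0 : ℝ) 1, (x : ℂ) ^ ((u : ℂ) - 1) * (1 - (x : ℂ)) ^ ((v : ℂ) - 1) =
      ((x ^ (u - 1) * (1 - x) ^ (v - 1) : ℝ) : ℂ) := fun x ⟨hx0, hx1⟩ ↦ by
    rw [Complex.ofReal_mul, Complex.ofReal_cpow hx0.le, Complex.ofReal_cpow (sub_pos.2 hx1).le]
    push_cast
    rfl
  rw [beta_eq_betaIntegralReal u v hu hv, Complex.betaIntegral,
    intervalIntegral.integral_of_le zero_le_one, integral_Ioc_eq_integral_Ioo,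
    setIntegral_congr_fun measurableSet_Ioo h, integral_complex_ofReal, Complex.ofReal_re]

theorem ProbabilityTheory.beta_add_mul_beta_add_le {a c s t : ℝ} (ha : 0 < a) (hc : 0 < c)
    (hs : 0 ≤ s) (ht : 0 ≤ t) :
    beta (a + s) c * beta (a + t) c ≤ beta a c * beta (a + (s + t)) c := by
  set w : ℝ → ℝ := fun x ↦ x ^ (a - 1) * (1 - x) ^ (c - 1)
  have hw : ∀ r : ℝ, ∀ x ∈ Ioo (0 : ℝ) 1, x ^ (a + r - 1) * (1 - x) ^ (c - 1) = w x * x ^ r :=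
    fun r x hx ↦ by rw [add_sub_right_comm, rpow_add hx.1]; ring
  have hint : ∀ r : ℝ, 0 ≤ r → IntegrableOn (fun x ↦ w x * x ^ r) (Ioo 0 1) := fun r hr ↦
    (integrableOn_rpow_mul_one_sub_rpow (by linarith) hc).congr_fun (hw r) measurableSet_Ioo
  have hbeta : ∀ r : ℝ, 0 ≤ r → beta (a + r) c = ∫ x in Ioo 0 1, w x * x ^ r := fun r hr ↦ by
    rw [beta_eq_integral (by linarith) hc]
    exact setIntegral_congr_fun measurableSet_Ioo (hw r)
  have hbeta₀ : beta a c = ∫ x in Ioo 0 1, w x := by simpa using hbeta 0 le_rfl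
  have hst : ∀ x ∈ Ioo (0 : ℝ) 1, w x * x ^ (s + t) = w x * x ^ s * x ^ t :=
    fun x hx ↦ by rw [rpow_add hx.1]; ring
  rw [hbeta s hs, hbeta t ht, hbeta₀, hbeta (s + t) (add_nonneg hs ht),
    setIntegral_congr_fun measurableSet_Ioo hst]
  have hmono : ∀ r : ℝ, 0 ≤ r → MonotoneOn (fun x : ℝ ↦ x ^ r) (Ioo 0 1) :=
    fun r hr x hx y _ hxy ↦ rpow_le_rpow hx.1.le hxy hr
  exact integral_mul_integral_le_of_monovaryOn (ae_restrict_mem measurableSet_Ioo)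
    ((hmono s hs).monovaryOn (hmono t ht))
    (fun x hx ↦ mul_nonneg (rpow_nonneg hx.1.le _) (rpow_nonneg (sub_pos.2 hx.2).le _))
    (integrableOn_rpow_mul_one_sub_rpow ha hc) (hint s hs) (hint t ht)
    ((hint (s + t) (add_nonneg hs ht)).congr_fun hst measurableSet_Ioo)

noncomputable def gammaRatio (a b x : ℝ) : ℝ :=
  Gamma a * Gamma (b + x) / (Gamma b * Gamma (a + x))

theorem gammaRatio_add_eq_beta_div_beta {a c x : ℝ} (ha : 0 < a) (hc : 0 < c) (hx : 0 ≤ x) :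
    gammaRatio a (a + c) x = beta a c / beta (a + x) c := by
  have := Gamma_pos_of_pos ha
  have := Gamma_pos_of_pos hc
  have := Gamma_pos_of_pos (add_pos ha hc)
  have := Gamma_pos_of_pos (add_pos_of_pos_of_nonneg ha hx)
  have := Gamma_pos_of_pos (add_pos_of_pos_of_nonneg (add_pos ha hc) hx)
  rw [gammaRatio, beta, beta, add_right_comm a x c]
  field_simp

theorem gammaRatio_add_le_mul {a b s t : ℝ} (ha : 0 < a) (hab : a ≤ b) (hs : 0 ≤ s) (ht : 0 ≤ t) :
    gammaRatio a b (s + t) ≤ gammaRatio a b s * gammaRatio a b t := by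
  obtain ⟨c, hc, rfl⟩ : ∃ c, 0 ≤ c ∧ b = a + c := ⟨b - a, by linarith, by ring⟩
  rcases hc.eq_or_lt with rfl | hc
  · have hself : ∀ x, 0 ≤ x → gammaRatio a (a + 0) x = 1 := fun x hx ↦ by
      have := Gamma_pos_of_pos (add_pos_of_pos_of_nonneg ha hx)
      rw [gammaRatio, add_zero, div_self (by positivity)]
    rw [hself _ (add_nonneg hs ht), hself s hs, hself t ht, one_mul]
  · have hβ := beta_pos ha hc
    have hβs := beta_pos (add_pos_of_pos_of_nonneg ha hs) hc
    have hβt := beta_pos (add_pos_of_pos_of_nonneg ha ht) hc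
    have hβst := beta_pos (add_pos_of_pos_of_nonneg ha (add_nonneg hs ht)) hc
    rw [gammaRatio_add_eq_beta_div_beta ha hc hs, gammaRatio_add_eq_beta_div_beta ha hc ht,
      gammaRatio_add_eq_beta_div_beta ha hc (add_nonneg hs ht), div_mul_div_comm,
      div_le_div_iff₀ hβst (mul_pos hβs hβt)]
    linarith [mul_le_mul_of_nonneg_left (beta_add_mul_beta_add_le ha hc hs ht) hβ.le]

theorem gammaRatio_submultiplicative_general (p : ℝ) (hp : 2 ≤ p) (k l : ℕ) :
    Real.Gamma (1 / p) * Real.Gamma ((1 - 1 / p) + (k + l : ℝ) / 2) /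
        (Real.Gamma (1 - 1 / p) * Real.Gamma (1 / p + (k + l : ℝ) / 2)) ≤
      (Real.Gamma (1 / p) * Real.Gamma ((1 - 1 / p) + (k : ℝ) / 2) /
          (Real.Gamma (1 - 1 / p) * Real.Gamma (1 / p + (k : ℝ) / 2))) *
        (Real.Gamma (1 / p) * Real.Gamma ((1 - 1 / p) + (l : ℝ) / 2) /
          (Real.Gamma (1 - 1 / p) * Real.Gamma (1 / p + (l : ℝ) / 2))) := by
  have hp₀ : 0 < p := by linarith
  have hab : 1 / p ≤ 1 - 1 / p := by
    have : 1 / p ≤ 1 / 2 := one_div_le_one_div_of_le two_pos hp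
    linarith
  rw [add_div]
  exact gammaRatio_add_le_mul (by positivity) hab (by positivity) (by positivity)

theorem gammaRatio_submultiplicative (p : ℝ) (hp : 2 ≤ p) (k l : ℕ) (hk : 1 ≤ k) (hl : 1 ≤ l) :
    Real.Gamma (1 / p) * Real.Gamma ((1 - 1 / p) + (k + l : ℝ) / 2) /
        (Real.Gamma (1 - 1 / p) * Real.Gamma (1 / p + (k + l : ℝ) / 2)) ≤
      (Real.Gamma (1 / p) * Real.Gamma ((1 - 1 / p) + (k : ℝ) / 2) /
          (Real.Gamma (1 - 1 / p) * Real.Gamma (1 / p + (k : ℝ) / 2))) *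
        (Real.Gamma (1 / p) * Real.Gamma ((1 - 1 / p) + (l : ℝ) / 2) /
          (Real.Gamma (1 - 1 / p) * Real.Gamma (1 / p + (l : ℝ) / 2))) :=
  gammaRatio_submultiplicative_general p hp k l
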